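/- Let M be a hypermodular rank-4 matroid on ground set E and suppose Γ is a set of pairwise coplanar, pairwise disjoint lines partitioning E, containing the disjoint coplanar lines l₁ and l₂. Then the collection 𝓜 of all flats of M that contain some line of Γ is a modular cut of M, and the corresponding single-element extension M +_𝓜 p makes l₁ and l₂ intersect in the new point p. -/

import Mathlib

/-!
Every flat containing a line of `Γ` is a union of lines of `Γ`: in a hypermodular matroid of
rank `4` two distinct planes meet in a line, so a plane through a line of `Γ` contains every
line of `Γ` it meets. Hence the intersection of two members of the cut is again a member as
soon as it is nonempty, and a disjoint modular pair would force two lines of `Γ` to span rank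
`4`. The extension is built from its independent sets as in Crapo's theorem; modularity of the
cut enters the augmentation axiom through two distinct flats covering a flat outside the cut.
-/

open Set

namespace StickyKantor

variable {α : Type*}

/-- The rank of a set in a matroid, as an integer (junk value `0` when infinite). -/
noncomputable def rk (M : Matroid α) (X : Set α) : ℤ :=
  ((⨆ I ∈ {I : Set α | M.Indep I ∧ I ⊆ X}, I.encard).toNat : ℤ)

/-- The modular defect of a pair of sets. -/
noncomputable def mdefect (M : Matroid α) (X Y : Set α) : ℤ :=
  rk M X + rk M Y - rk M (X ∪ Y) - rk M (X ∩ Y)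

/-- A modular pair of sets. -/
def ModularPair (M : Matroid α) (X Y : Set α) : Prop :=
  rk M X + rk M Y = rk M (X ∪ Y) + rk M (X ∩ Y)

/-- `M'` is an extension of `M`: it has a larger ground set and restricts to `M`. -/
def IsExtension (M' M : Matroid α) : Prop :=
  M.E ⊆ M'.E ∧ M = M'.restrict M.E

/-- A point: a rank-1 flat. -/
def IsPoint (M : Matroid α) (p : Set α) : Prop := M.IsFlat p ∧ rk M p = 1

/-- A line: a rank-2 flat. -/
def IsLine (M : Matroid α) (l : Set α) : Prop := M.IsFlat l ∧ rk M l = 2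

/-- A plane: a rank-3 flat. -/
def IsPlane (M : Matroid α) (e : Set α) : Prop := M.IsFlat e ∧ rk M e = 3

/-- Two lines are coplanar if their join has rank at most 3. -/
def Coplanar (M : Matroid α) (l₁ l₂ : Set α) : Prop := rk M (l₁ ∪ l₂) ≤ 3

/-- A hyperplane: a maximal proper flat. -/
def IsHyperplane (M : Matroid α) (H : Set α) : Prop :=
  M.IsFlat H ∧ H ≠ M.E ∧ ∀ F, M.IsFlat F → H ⊂ F → F = M.E

/-- A matroid is hypermodular if every pair of hyperplanes is a modular pair. -/
def Hypermodular (M : Matroid α) : Prop :=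
  ∀ H₁ H₂, IsHyperplane M H₁ → IsHyperplane M H₂ → ModularPair M H₁ H₂

/-- A matroid is modular if every pair of flats is a modular pair. -/
def Modular (M : Matroid α) : Prop :=
  ∀ F₁ F₂, M.IsFlat F₁ → M.IsFlat F₂ → ModularPair M F₁ F₂

/-- A modular cut: an up-closed family of flats closed under intersections of
modular pairs. -/
def IsModularCut (M : Matroid α) (𝓜 : Set (Set α)) : Prop :=
  (∀ F ∈ 𝓜, M.IsFlat F) ∧
  (∀ F ∈ 𝓜, ∀ F', M.IsFlat F' → F ⊆ F' → F' ∈ 𝓜) ∧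
  (∀ F₁ ∈ 𝓜, ∀ F₂ ∈ 𝓜, ModularPair M F₁ F₂ → F₁ ∩ F₂ ∈ 𝓜)

/-- The principal modular cut of a flat `F`. -/
def principalCut (M : Matroid α) (F : Set α) : Set (Set α) :=
  {G | M.IsFlat G ∧ F ⊆ G}

/-- The modular cut generated by a family of flats. -/
def genCut (M : Matroid α) (A : Set (Set α)) : Set (Set α) :=
  ⋂₀ {𝓜 | IsModularCut M 𝓜 ∧ A ⊆ 𝓜}

/-- A non-modular pair of flats is intersectable if the modular cut it generates is
not the principal modular cut of its intersection. -/
def Intersectable (M : Matroid α) (X Y : Set α) : Prop :=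
  genCut M {X, Y} ≠ principalCut M (X ∩ Y)

/-- A matroid is OTE (only trivially extendable) if every nonempty modular cut
is principal. -/
def OTE (M : Matroid α) : Prop :=
  ∀ 𝓜, IsModularCut M 𝓜 → 𝓜 ≠ ∅ → ∃ F, M.IsFlat F ∧ 𝓜 = principalCut M F

/-- A matroid is sticky if every pair of extensions meeting exactly in its ground set
has an amalgam. -/
def Sticky (M : Matroid α) : Prop :=
  ∀ N₁ N₂ : Matroid α, IsExtension N₁ M → IsExtension N₂ M → N₁.E ∩ N₂.E = M.E →
    ∃ A : Matroid α, A.E = N₁.E ∪ N₂.E ∧ IsExtension A N₁ ∧ IsExtension A N₂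

/-- The function `η` of the amalgam construction. -/
noncomputable def eta (M M₁ M₂ : Matroid α) (X : Set α) : ℤ :=
  rk M₁ (X ∩ M₁.E) + rk M₂ (X ∩ M₂.E) - rk M (X ∩ M.E)

/-- The function `ξ` of the amalgam construction. -/
noncomputable def xi (M M₁ M₂ : Matroid α) (X : Set α) : ℤ :=
  sInf {n : ℤ | ∃ Y, X ⊆ Y ∧ Y ⊆ M₁.E ∪ M₂.E ∧ n = eta M M₁ M₂ Y}

/-- The lattice `𝓛(M₁,M₂)` of sets whose traces on both ground sets are flats. -/
def latticeL (M₁ M₂ : Matroid α) : Set (Set α) :=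
  {X | X ⊆ M₁.E ∪ M₂.E ∧ M₁.IsFlat (X ∩ M₁.E) ∧ M₂.IsFlat (X ∩ M₂.E)}

section Rank

variable {M : Matroid α} {I X Y F G : Set α} {e : α}

lemma rk_eq_toNat_eRk (M : Matroid α) (X : Set α) : rk M X = (M.eRk X).toNat := by
  obtain ⟨J, hJ⟩ := M.exists_isBasis' X
  have hsup : (⨆ I ∈ {I : Set α | M.Indep I ∧ I ⊆ X}, I.encard) = M.eRk X :=
    le_antisymm (iSup₂_le fun I hI => hI.1.encard_le_eRk_of_subset hI.2)
      (hJ.encard_eq_eRk ▸ le_iSup₂_of_le J ⟨hJ.indep, hJ.subset⟩ le_rfl)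
  rw [rk, hsup]

lemma rk_empty (M : Matroid α) : rk M ∅ = 0 := by
  simp [rk_eq_toNat_eRk]

lemma rk_closure_eq (M : Matroid α) (X : Set α) : rk M (M.closure X) = rk M X := by
  rw [rk_eq_toNat_eRk, rk_eq_toNat_eRk, Matroid.eRk_closure_eq]

lemma _root_.Matroid.Indep.rk_eq_ncard (hI : M.Indep I) : rk M I = I.ncard := by
  rw [rk_eq_toNat_eRk, hI.eRk_eq_encard, Set.ncard_def]

lemma _root_.Matroid.IsFlat.inter (hF : M.IsFlat F) (hG : M.IsFlat G) : M.IsFlat (F ∩ G) := by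
  rw [inter_eq_iInter]
  exact Matroid.IsFlat.iInter (by rintro (_ | _) <;> assumption)

variable [M.RankFinite]

lemma eRk_ne_top (X : Set α) : M.eRk X ≠ ⊤ :=
  Matroid.eRk_ne_top_iff.2 (M.isRkFinite_set X)

lemma rk_mono (hXY : X ⊆ Y) : rk M X ≤ rk M Y := by
  simp only [rk_eq_toNat_eRk, Nat.cast_le]
  exact ENat.toNat_le_toNat (M.eRk_mono hXY) (eRk_ne_top Y)

lemma rk_inter_add_rk_union_le (X Y : Set α) :
    rk M (X ∩ Y) + rk M (X ∪ Y) ≤ rk M X + rk M Y := by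
  have h := ENat.toNat_le_toNat (M.eRk_submod X Y)
    (WithTop.add_ne_top.2 ⟨eRk_ne_top X, eRk_ne_top Y⟩)
  rw [ENat.toNat_add (eRk_ne_top _) (eRk_ne_top _),
    ENat.toNat_add (eRk_ne_top _) (eRk_ne_top _)] at h
  simp only [rk_eq_toNat_eRk]
  exact_mod_cast h

lemma rk_insert_eq_add_one (he : e ∈ M.E \ M.closure X) : rk M (insert e X) = rk M X + 1 := by
  rw [rk_eq_toNat_eRk, rk_eq_toNat_eRk, Matroid.eRk_insert_eq_add_one he,
    ENat.toNat_add (eRk_ne_top X) ENat.one_ne_top, ENat.toNat_one]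
  push_cast
  rfl

lemma _root_.Matroid.IsFlat.rk_lt_rk_of_ssubset (hF : M.IsFlat F) (hFX : F ⊂ X)
    (hX : X ⊆ M.E) : rk M F < rk M X := by
  obtain ⟨x, hxX, hxF⟩ := exists_of_ssubset hFX
  have hx : x ∈ M.E \ M.closure F := ⟨hX hxX, by rwa [hF.closure]⟩
  calc rk M F < rk M (insert x F) := by rw [rk_insert_eq_add_one hx]; omega
    _ ≤ rk M X := rk_mono (insert_subset hxX hFX.subset)

lemma _root_.Matroid.IsFlat.eq_of_subset_of_rk_le (hF : M.IsFlat F) (hG : M.IsFlat G)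
    (hFG : F ⊆ G) (hr : rk M G ≤ rk M F) : F = G := by
  by_contra hne
  exact (hF.rk_lt_rk_of_ssubset (hFG.ssubset_of_ne hne) hG.subset_ground).not_ge hr

lemma _root_.Matroid.IsFlat.rk_add_one_le_rk_union (hF : M.IsFlat F) (hG : M.IsFlat G)
    (hr : rk M F ≤ rk M G) (hne : F ≠ G) : rk M F + 1 ≤ rk M (F ∪ G) := by
  have hGF : ¬ G ⊆ F := fun h => hne (hG.eq_of_subset_of_rk_le hF h hr).symm
  exact hF.rk_lt_rk_of_ssubset (ssubset_union_left_iff.2 hGF)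
    (union_subset hF.subset_ground hG.subset_ground)

lemma exists_mem_notMem_closure_of_rk_le (hr : rk M X ≤ rk M Y)
    (hne : M.closure Y ≠ M.closure X) : ∃ y ∈ Y, y ∉ M.closure X := by
  by_contra! hYX
  refine hne ((Matroid.isFlat_closure _).eq_of_subset_of_rk_le (Matroid.isFlat_closure _)
    (M.closure_subset_closure_of_subset_closure hYX) ?_)
  rwa [rk_closure_eq, rk_closure_eq]

end Rank

section Geometry

variable {M : Matroid α} [M.RankFinite] {F P l l' : Set α} {x : α}

lemma isHyperplane_of_rk_add_one_eq (hF : M.IsFlat F) (hr : rk M F + 1 = rk M M.E) :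
    IsHyperplane M F := by
  refine ⟨hF, fun hFE => by rw [hFE] at hr; omega, fun G hG hFG => ?_⟩
  have hlt := hF.rk_lt_rk_of_ssubset hFG hG.subset_ground
  exact hG.eq_of_subset_of_rk_le M.ground_isFlat hG.subset_ground (by omega)

lemma Hypermodular.rk_inter_of_isPlane (hhm : Hypermodular M) (hrank : rk M M.E = 4)
    (hP : IsPlane M P) (hF : IsPlane M F) (hne : P ≠ F) : rk M (P ∩ F) = 2 := by
  have hmod := hhm P F (isHyperplane_of_rk_add_one_eq hP.1 (by rw [hP.2, hrank]; rfl))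
    (isHyperplane_of_rk_add_one_eq hF.1 (by rw [hF.2, hrank]; rfl))
  have hU := hP.1.rk_add_one_le_rk_union hF.1 (by rw [hP.2, hF.2]) hne
  have hUE := rk_mono (M := M) (union_subset hP.1.subset_ground hF.1.subset_ground)
  unfold ModularPair at hmod
  have := hP.2
  have := hF.2
  omega

/-- Otherwise `F` would meet the plane spanned by `l ∪ l'` in more than a line. -/
lemma Hypermodular.subset_of_coplanar (hhm : Hypermodular M) (hrank : rk M M.E = 4)
    (hl : l ⊆ M.E) (hl' : IsLine M l') (hcop : Coplanar M l l') (hF : IsPlane M F)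
    (hl'F : l' ⊆ F) (hx : x ∈ l \ l') (hxF : x ∈ F) : l ⊆ F := by
  set P := M.closure (l ∪ l')
  have hlP : l ∪ l' ⊆ P := M.subset_closure _ (union_subset hl hl'.1.subset_ground)
  have hxl' : rk M (insert x l') = 3 := by
    rw [rk_insert_eq_add_one ⟨hl hx.1, by rw [hl'.1.closure]; exact hx.2⟩, hl'.2]
    rfl
  have hP : IsPlane M P := by
    refine ⟨Matroid.isFlat_closure _, ?_⟩
    have := rk_mono (M := M) (insert_subset (Or.inl hx.1) subset_union_right :
      insert x l' ⊆ l ∪ l')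
    unfold Coplanar at hcop
    rw [rk_closure_eq]
    omega
  by_contra hlF
  have hne : P ≠ F := fun h => hlF (h ▸ subset_union_left.trans hlP)
  have h3 : rk M (insert x l') ≤ rk M (P ∩ F) :=
    rk_mono (insert_subset ⟨hlP (Or.inl hx.1), hxF⟩
      (subset_inter (subset_union_right.trans hlP) hl'F))
  rw [hhm.rk_inter_of_isPlane hrank hP hF hne] at h3
  omega

end Geometry

section LinePartition

variable {M : Matroid α} [M.RankFinite] {Γ : Set (Set α)} {F F₁ F₂ l l₁ l₂ l' : Set α} {x : α}

lemma subset_of_mem_of_line_subset (hhm : Hypermodular M) (hrank : rk M M.E = 4)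
    (hlines : ∀ l ∈ Γ, IsLine M l) (hpdisj : ∀ l ∈ Γ, ∀ l' ∈ Γ, l ≠ l' → l ∩ l' = ∅)
    (hpcop : ∀ l ∈ Γ, ∀ l' ∈ Γ, Coplanar M l l') (hF : M.IsFlat F) (hl : l ∈ Γ)
    (hlF : l ⊆ F) (hl' : l' ∈ Γ) (hx : x ∈ l') (hxF : x ∈ F) : l' ⊆ F := by
  obtain rfl | hne := eq_or_ne l' l
  · exact hlF
  have hxl : x ∉ l := fun h => (eq_empty_iff_forall_notMem.1 (hpdisj l' hl' l hl hne)) x ⟨hx, h⟩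
  have h2 : 2 ≤ rk M F := (hlines l hl).2 ▸ rk_mono hlF
  have h4 : rk M F ≤ 4 := hrank ▸ rk_mono hF.subset_ground
  obtain h | h | h : rk M F = 2 ∨ rk M F = 3 ∨ rk M F = 4 := by omega
  · have hlF' := (hlines l hl).1.eq_of_subset_of_rk_le hF hlF (by rw [h, (hlines l hl).2])
    exact absurd (hlF' ▸ hxF) hxl
  · exact hhm.subset_of_coplanar hrank (hlines l' hl').1.subset_ground (hlines l hl)
      (hpcop l' hl' l hl) ⟨hF, h⟩ hlF ⟨hx, hxl⟩ hxF
  · rw [hF.eq_of_subset_of_rk_le M.ground_isFlat hF.subset_ground (by omega)]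
    exact (hlines l' hl').1.subset_ground

/-- Disjoint flats form a modular pair only if their ranks add up to at most `4`, which for
flats containing lines of `Γ` leaves only two lines, whose join has rank at most `3`. -/
lemma inter_nonempty_of_modularPair (hrank : rk M M.E = 4) (hlines : ∀ l ∈ Γ, IsLine M l)
    (hpcop : ∀ l ∈ Γ, ∀ l' ∈ Γ, Coplanar M l l') (hF₁ : M.IsFlat F₁) (hl₁ : l₁ ∈ Γ)
    (hl₁F₁ : l₁ ⊆ F₁) (hF₂ : M.IsFlat F₂) (hl₂ : l₂ ∈ Γ) (hl₂F₂ : l₂ ⊆ F₂)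
    (hmod : ModularPair M F₁ F₂) : (F₁ ∩ F₂).Nonempty := by
  rw [nonempty_iff_ne_empty]
  intro hempty
  unfold ModularPair at hmod
  rw [hempty, rk_empty] at hmod
  have h₁ : 2 ≤ rk M F₁ := (hlines l₁ hl₁).2 ▸ rk_mono hl₁F₁
  have h₂ : 2 ≤ rk M F₂ := (hlines l₂ hl₂).2 ▸ rk_mono hl₂F₂
  have hU : rk M (F₁ ∪ F₂) ≤ 4 := hrank ▸ rk_mono (union_subset hF₁.subset_ground hF₂.subset_ground)
  have e₁ := (hlines l₁ hl₁).1.eq_of_subset_of_rk_le hF₁ hl₁F₁ (by rw [(hlines l₁ hl₁).2]; omega)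
  have e₂ := (hlines l₂ hl₂).1.eq_of_subset_of_rk_le hF₂ hl₂F₂ (by rw [(hlines l₂ hl₂).2]; omega)
  have hcop := hpcop l₁ hl₁ l₂ hl₂
  unfold Coplanar at hcop
  rw [e₁, e₂] at hcop
  omega

theorem isModularCut_of_linePartition (hhm : Hypermodular M) (hrank : rk M M.E = 4)
    (hlines : ∀ l ∈ Γ, IsLine M l) (hpdisj : ∀ l ∈ Γ, ∀ l' ∈ Γ, l ≠ l' → l ∩ l' = ∅)
    (hpcop : ∀ l ∈ Γ, ∀ l' ∈ Γ, Coplanar M l l') (hpart : ⋃₀ Γ = M.E) :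
    IsModularCut M {F | M.IsFlat F ∧ ∃ l ∈ Γ, l ⊆ F} := by
  refine ⟨fun F hF => hF.1, ?_, ?_⟩
  · rintro F ⟨-, l, hl, hlF⟩ G hG hFG
    exact ⟨hG, l, hl, hlF.trans hFG⟩
  · rintro F₁ ⟨hF₁, l₁, hl₁, hl₁F₁⟩ F₂ ⟨hF₂, l₂, hl₂, hl₂F₂⟩ hmod
    obtain ⟨x, hx₁, hx₂⟩ :=
      inter_nonempty_of_modularPair hrank hlines hpcop hF₁ hl₁ hl₁F₁ hF₂ hl₂ hl₂F₂ hmod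
    obtain ⟨l, hl, hxl⟩ := mem_sUnion.1 (hpart ▸ hF₁.subset_ground hx₁)
    exact ⟨hF₁.inter hF₂, l, hl, subset_inter
      (subset_of_mem_of_line_subset hhm hrank hlines hpdisj hpcop hF₁ hl₁ hl₁F₁ hl hxl hx₁)
      (subset_of_mem_of_line_subset hhm hrank hlines hpdisj hpcop hF₂ hl₂ hl₂F₂ hl hxl hx₂)⟩

end LinePartition

section ModularCut

variable {M : Matroid α} [M.RankFinite] {𝓜 : Set (Set α)} {F G₁ G₂ I J : Set α}

lemma IsModularCut.mem_of_covers (h𝓜 : IsModularCut M 𝓜) (hF : M.IsFlat F)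
    (hG₁ : M.IsFlat G₁) (hG₂ : M.IsFlat G₂) (hFG₁ : F ⊆ G₁) (hFG₂ : F ⊆ G₂)
    (hr₁ : rk M G₁ = rk M F + 1) (hr₂ : rk M G₂ = rk M F + 1) (hne : G₁ ≠ G₂)
    (h₁ : G₁ ∈ 𝓜) (h₂ : G₂ ∈ 𝓜) : F ∈ 𝓜 := by
  have hinter : G₁ ∩ G₂ ≠ G₁ := fun h =>
    hne (hG₁.eq_of_subset_of_rk_le hG₂ (inter_eq_left.1 h) (by omega))
  have hlt := (hG₁.inter hG₂).rk_lt_rk_of_ssubset (inter_subset_left.ssubset_of_ne hinter)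
    hG₁.subset_ground
  have hFeq : F = G₁ ∩ G₂ :=
    hF.eq_of_subset_of_rk_le (hG₁.inter hG₂) (subset_inter hFG₁ hFG₂) (by omega)
  have hU := hG₁.rk_add_one_le_rk_union hG₂ (by omega) hne
  have hsub := rk_inter_add_rk_union_le (M := M) G₁ G₂
  have hmod : ModularPair M G₁ G₂ := by
    unfold ModularPair
    rw [← hFeq] at hsub ⊢
    omega
  exact hFeq ▸ h𝓜.2.2 G₁ h₁ G₂ h₂ hmod

/-- If every independent extension of `I` by an element of `J` spans a flat of `𝓜`, these flats
all cover `closure I ∉ 𝓜`, hence coincide by `mem_of_covers`; so `J` lies in one of them. -/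
lemma IsModularCut.exists_insert_closure_notMem (h𝓜 : IsModularCut M 𝓜)
    (hI : M.Indep I) (hIcl : M.closure I ∉ 𝓜) (hJ : M.Indep J) (hr : rk M I < rk M J)
    (hJcl : rk M J = rk M I + 1 → M.closure J ∉ 𝓜) :
    ∃ x ∈ J \ I, M.Indep (insert x I) ∧ M.closure (insert x I) ∉ 𝓜 := by
  by_contra! hcon
  have hcover : ∀ y ∈ J, y ∉ M.closure I →
      M.closure (insert y I) ∈ 𝓜 ∧ rk M (M.closure (insert y I)) = rk M (M.closure I) + 1 := by
    intro y hy hyI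
    have hyE : y ∈ M.E \ M.closure I := ⟨hJ.subset_ground hy, hyI⟩
    have hyI' : y ∉ I := fun h => hyI (M.subset_closure I hI.subset_ground h)
    refine ⟨hcon y ⟨hy, hyI'⟩ ((hI.insert_indep_iff_of_notMem hyI').2 hyE), ?_⟩
    rw [rk_closure_eq, rk_closure_eq, rk_insert_eq_add_one hyE]
  have hJI : M.closure J ≠ M.closure I := fun h => by
    have hrk := rk_closure_eq M J
    rw [h, rk_closure_eq] at hrk
    omega
  obtain ⟨x, hxJ, hxI⟩ := exists_mem_notMem_closure_of_rk_le hr.le hJI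
  set G := M.closure (insert x I)
  have hIG : M.closure I ⊆ G := M.closure_subset_closure (subset_insert x I)
  have hJG : J ⊆ G := by
    intro y hy
    by_contra hyG
    have hyI : y ∉ M.closure I := fun h => hyG (hIG h)
    have hne : G ≠ M.closure (insert y I) := fun h =>
      hyG (h ▸ M.subset_closure _ (insert_subset (hJ.subset_ground hy) hI.subset_ground)
        (mem_insert y I))
    exact hIcl (h𝓜.mem_of_covers (Matroid.isFlat_closure _) (Matroid.isFlat_closure _)
      (Matroid.isFlat_closure _) hIG (M.closure_subset_closure (subset_insert y I))
      (hcover x hxJ hxI).2 (hcover y hy hyI).2 hne (hcover x hxJ hxI).1 (hcover y hy hyI).1)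
  have hrG : rk M G = rk M I + 1 := by rw [(hcover x hxJ hxI).2, rk_closure_eq]
  have hrJ : rk M J ≤ rk M G := rk_mono hJG
  have hJG' : M.closure J = G :=
    (Matroid.isFlat_closure _).eq_of_subset_of_rk_le (Matroid.isFlat_closure _)
      (M.closure_subset_closure_of_subset_closure hJG) (by rw [rk_closure_eq M J]; omega)
  exact hJcl (by omega) (hJG' ▸ (hcover x hxJ hxI).1)

end ModularCut

section ExtIndep

variable {M : Matroid α} {𝓜 : Set (Set α)} {I J : Set α} {p : α}

/-- The independent sets of the single-element extension `M +_𝓜 p`. -/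
def ExtIndep (M : Matroid α) (𝓜 : Set (Set α)) (p : α) (I : Set α) : Prop :=
  M.Indep (I \ {p}) ∧ (p ∈ I → M.closure (I \ {p}) ∉ 𝓜)

lemma extIndep_iff_of_notMem (hpI : p ∉ I) : ExtIndep M 𝓜 p I ↔ M.Indep I := by
  simp [ExtIndep, sdiff_singleton_eq_self hpI, hpI]

lemma extIndep_insert_iff (hpI : p ∉ I) :
    ExtIndep M 𝓜 p (insert p I) ↔ M.Indep I ∧ M.closure I ∉ 𝓜 := by
  simp [ExtIndep, insert_sdiff_of_mem I (mem_singleton p), sdiff_singleton_eq_self hpI]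

lemma ExtIndep.subset_ground (hI : ExtIndep M 𝓜 p I) : I ⊆ insert p M.E :=
  sdiff_singleton_subset_iff.1 hI.1.subset_ground

lemma ExtIndep.subset (h𝓜 : IsModularCut M 𝓜) (hJ : ExtIndep M 𝓜 p J) (hIJ : I ⊆ J) :
    ExtIndep M 𝓜 p I := by
  have hIJ' : I \ {p} ⊆ J \ {p} := sdiff_subset_sdiff_left hIJ
  refine ⟨hJ.1.subset hIJ', fun hpI hI => hJ.2 (hIJ hpI) ?_⟩
  exact h𝓜.2.1 _ hI _ (Matroid.isFlat_closure _) (M.closure_subset_closure hIJ')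

lemma ExtIndep.encard_le [M.RankFinite] (hI : ExtIndep M 𝓜 p I) :
    I.encard ≤ M.eRank + 1 :=
  calc I.encard ≤ (insert p (I \ {p})).encard :=
        encard_le_encard (subset_insert_sdiff_singleton p I)
    _ ≤ (I \ {p}).encard + 1 := encard_insert_le _ _
    _ ≤ M.eRank + 1 := by gcongr; exact hI.1.encard_le_eRank

lemma ExtIndep.finite [M.RankFinite] (hI : ExtIndep M 𝓜 p I) : I.Finite :=
  hI.1.finite.insert p |>.subset (subset_insert_sdiff_singleton p I)

lemma ExtIndep.augment [M.RankFinite] (h𝓜 : IsModularCut M 𝓜) (hp : p ∉ M.E)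
    (hI : ExtIndep M 𝓜 p I) (hJ : ExtIndep M 𝓜 p J) (hcard : I.ncard < J.ncard) :
    ∃ e ∈ J, e ∉ I ∧ ExtIndep M 𝓜 p (insert e I) := by
  have hJ₀ : J.ncard ≤ (J \ {p}).ncard + 1 := by
    have := pred_ncard_le_ncard_sdiff_singleton J p
    omega
  have hrJ₀ := hJ.1.rk_eq_ncard
  by_cases hpI : p ∈ I
  · have hI₀ : (I \ {p}).ncard + 1 = I.ncard := ncard_sdiff_singleton_add_one hpI hI.finite
    have hrI₀ := hI.1.rk_eq_ncard
    have hpJ_of_rk (h : rk M (J \ {p}) = rk M (I \ {p}) + 1) : p ∈ J := by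
      by_contra hpJ
      rw [sdiff_singleton_eq_self hpJ] at h hrJ₀
      omega
    obtain ⟨x, hx, hxi, hxcl⟩ := h𝓜.exists_insert_closure_notMem hI.1 (hI.2 hpI) hJ.1
      (by omega) (fun h => hJ.2 (hpJ_of_rk h))
    have hins : insert x I \ {p} = insert x (I \ {p}) := (insert_sdiff_singleton_comm hx.1.2 I).symm
    exact ⟨x, hx.1.1, fun h => hx.2 ⟨h, hx.1.2⟩, by rw [hins]; exact hxi, fun _ => by
      rw [hins]; exact hxcl⟩
  have hIi : M.Indep I := (extIndep_iff_of_notMem hpI).1 hI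
  by_cases hadd : p ∈ J ∧ M.closure I ∉ 𝓜
  · exact ⟨p, hadd.1, hpI, (extIndep_insert_iff hpI).2 ⟨hIi, hadd.2⟩⟩
  have hrI := hIi.rk_eq_ncard
  have hne : M.closure (J \ {p}) ≠ M.closure I := by
    intro h
    by_cases hpJ : p ∈ J
    · exact hadd ⟨hpJ, h ▸ hJ.2 hpJ⟩
    · have hr := congrArg (rk M) h
      rw [rk_closure_eq, rk_closure_eq, sdiff_singleton_eq_self hpJ] at hr
      rw [sdiff_singleton_eq_self hpJ] at hrJ₀
      omega
  obtain ⟨x, hxJ, hxI⟩ := exists_mem_notMem_closure_of_rk_le (by omega) hne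
  have hxE := hJ.1.subset_ground hxJ
  have hxI' : x ∉ I := fun h => hxI (M.subset_closure I hIi.subset_ground h)
  have hpx : p ∉ insert x I := by
    rintro (h | h)
    exacts [hp (h ▸ hxE), hpI h]
  exact ⟨x, hxJ.1, hxI', (extIndep_iff_of_notMem hpx).2
    ((hIi.insert_indep_iff_of_notMem hxI').2 ⟨hxE, hxI⟩)⟩

end ExtIndep

section Extension

variable {M : Matroid α} [M.RankFinite] {𝓜 : Set (Set α)} {F : Set α} {p : α}

noncomputable def IsModularCut.extension (h𝓜 : IsModularCut M 𝓜) (hp : p ∉ M.E) : Matroid α :=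
  (IndepMatroid.ofBddAugment (insert p M.E) (ExtIndep M 𝓜 p)
    ⟨M.empty_indep.subset sdiff_subset, fun h => h.elim⟩
    (fun _ _ hJ hIJ => hJ.subset h𝓜 hIJ)
    (fun I J hI hJ hcard => hI.augment h𝓜 hp hJ <| by
      rwa [← hI.finite.cast_ncard_eq, ← hJ.finite.cast_ncard_eq, Nat.cast_lt] at hcard)
    ⟨M.eRank.toNat + 1, fun I hI => by
      rw [Nat.cast_add, ENat.natCast_toNat (M.eRank_ne_top_iff.2 ‹_›), Nat.cast_one]
      exact hI.encard_le⟩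
    (fun _ hI => hI.subset_ground)).matroid

lemma IsModularCut.extension_ground (h𝓜 : IsModularCut M 𝓜) (hp : p ∉ M.E) :
    (h𝓜.extension hp).E = insert p M.E := rfl

lemma IsModularCut.extension_indep_iff (h𝓜 : IsModularCut M 𝓜) (hp : p ∉ M.E) {I : Set α} :
    (h𝓜.extension hp).Indep I ↔ ExtIndep M 𝓜 p I := Iff.rfl

lemma IsModularCut.isExtension_extension (h𝓜 : IsModularCut M 𝓜) (hp : p ∉ M.E) :
    IsExtension (h𝓜.extension hp) M := by
  refine ⟨subset_insert p M.E, Matroid.ext_indep rfl fun I hI => ?_⟩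
  have hpI : p ∉ I := fun h => hp (hI h)
  rw [Matroid.restrict_indep_iff, and_iff_left hI, h𝓜.extension_indep_iff,
    extIndep_iff_of_notMem hpI]

lemma IsModularCut.mem_closure_extension_iff (h𝓜 : IsModularCut M 𝓜) (hp : p ∉ M.E)
    (hF : M.IsFlat F) : p ∈ (h𝓜.extension hp).closure F ↔ F ∈ 𝓜 := by
  obtain ⟨I, hI⟩ := M.exists_isBasis F hF.subset_ground
  have hpI : p ∉ I := fun h => hp (hI.indep.subset_ground h)
  have hIF : M.closure I = F := by rw [hI.closure_eq_closure, hF.closure]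
  have hNI : (h𝓜.extension hp).IsBasis I F := by
    rw [(h𝓜.isExtension_extension hp).2, Matroid.isBasis_restrict_iff (subset_insert p M.E)] at hI
    exact hI.1
  rw [← hNI.closure_eq_closure, hNI.indep.mem_closure_iff_of_notMem hpI, Matroid.Dep,
    h𝓜.extension_ground, and_iff_left (insert_subset_insert hI.indep.subset_ground),
    h𝓜.extension_indep_iff, extIndep_insert_iff hpI, hIF, and_iff_right hI.indep,
    not_not]

end Extension

theorem partition_modular_cut_general (M : Matroid α) [M.RankFinite]
    (hhm : Hypermodular M) (hrank : rk M M.E = 4)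
    (l₁ l₂ : Set α) (h₁ : IsLine M l₁) (h₂ : IsLine M l₂)
    (Γ : Set (Set α)) (hl₁ : l₁ ∈ Γ) (hl₂ : l₂ ∈ Γ)
    (hlines : ∀ l ∈ Γ, IsLine M l)
    (hpdisj : ∀ l ∈ Γ, ∀ l' ∈ Γ, l ≠ l' → l ∩ l' = ∅)
    (hpcop : ∀ l ∈ Γ, ∀ l' ∈ Γ, Coplanar M l l')
    (hpart : ⋃₀ Γ = M.E)
    (p : α) (hp : p ∉ M.E) :
    IsModularCut M {F | M.IsFlat F ∧ ∃ l ∈ Γ, l ⊆ F} ∧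
      ∃ M' : Matroid α, IsExtension M' M ∧ M'.E = insert p M.E ∧
        (∀ F, M.IsFlat F → (p ∈ M'.closure F ↔ F ∈ {F | M.IsFlat F ∧ ∃ l ∈ Γ, l ⊆ F})) ∧
        p ∈ M'.closure l₁ ∩ M'.closure l₂ := by
  have h𝓜 := isModularCut_of_linePartition hhm hrank hlines hpdisj hpcop hpart
  have hcl := fun F (hF : M.IsFlat F) => h𝓜.mem_closure_extension_iff hp hF
  refine ⟨h𝓜, h𝓜.extension hp, h𝓜.isExtension_extension hp, rfl, hcl, ?_, ?_⟩
  · exact (hcl l₁ h₁.1).2 ⟨h₁.1, l₁, hl₁, subset_rfl⟩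
  · exact (hcl l₂ h₂.1).2 ⟨h₂.1, l₂, hl₂, subset_rfl⟩

/-- flats containing a line of a pairwise-coplanar line partition form a
modular cut, and the corresponding single-element extension makes `l₁` and `l₂`
intersect in the new point. -/
theorem partition_modular_cut (M : Matroid α) [M.RankFinite]
    (hhm : Hypermodular M) (hrank : rk M M.E = 4)
    (l₁ l₂ : Set α) (h₁ : IsLine M l₁) (h₂ : IsLine M l₂)
    (hdisj : l₁ ∩ l₂ = ∅) (hcop : Coplanar M l₁ l₂)
    (Γ : Set (Set α)) (hl₁ : l₁ ∈ Γ) (hl₂ : l₂ ∈ Γ)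
    (hlines : ∀ l ∈ Γ, IsLine M l)
    (hpdisj : ∀ l ∈ Γ, ∀ l' ∈ Γ, l ≠ l' → l ∩ l' = ∅)
    (hpcop : ∀ l ∈ Γ, ∀ l' ∈ Γ, Coplanar M l l')
    (hpart : ⋃₀ Γ = M.E)
    (p : α) (hp : p ∉ M.E) :
    IsModularCut M {F | M.IsFlat F ∧ ∃ l ∈ Γ, l ⊆ F} ∧
      ∃ M' : Matroid α, IsExtension M' M ∧ M'.E = insert p M.E ∧
        (∀ F, M.IsFlat F → (p ∈ M'.closure F ↔ F ∈ {F | M.IsFlat F ∧ ∃ l ∈ Γ, l ⊆ F})) ∧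
        p ∈ M'.closure l₁ ∩ M'.closure l₂ :=
  partition_modular_cut_general M hhm hrank l₁ l₂ h₁ h₂ Γ hl₁ hl₂ hlines hpdisj hpcop hpart p hp
end StickyKantor
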